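/- Let G be a finite connected graph. Then the following three statements are equivalent: (1) G has a perfect 2-matching; (2) for every subset S of V(G), the number of isolated vertices of G − S is at most |S|; (3) G has a spanning subgraph each of whose connected components is isomorphic to K_2 or to an odd cycle C_{2t+1} for some t ≥ 1. -/

import Mathlib

/-- A perfect `2`-matching of a simple graph `G` is an assignment `f` of weights in `{0, 1, 2}`
to the edges of `G` (non-edges get weight `0`) such that for every vertex `v`, the sum of the
weights of the edges incident with `v` equals `2`. -/
def SimpleGraph.IsPerfectTwoMatching {V : Type*} (G : SimpleGraph V)
    (f : Sym2 V → ℕ) : Prop :=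
  (∀ e, f e ≠ 0 → e ∈ G.edgeSet) ∧ (∀ e, f e ≤ 2) ∧
    ∀ v : V, ∑ᶠ e ∈ G.incidenceSet v, f e = 2

/-- `i(G - S)`: the number of isolated vertices of the subgraph of `G` induced on the
complement of `S`, i.e. the number of vertices outside `S` all of whose neighbours lie in `S`. -/
noncomputable def SimpleGraph.isoCount {V : Type*} (G : SimpleGraph V) (S : Set V) : ℕ :=
  Nat.card {v : V // v ∉ S ∧ ∀ w, G.Adj v w → w ∈ S}

/-- A `{K₂, C_{2t+1} | t ≥ 1}`-factor of `G`: a spanning subgraph `H ≤ G` each of whose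
connected components is isomorphic to `K₂` or to an odd cycle `C_{2t+1}` with `t ≥ 1`. -/
def SimpleGraph.HasK2OddCycleFactor {V : Type*} (G : SimpleGraph V) : Prop :=
  ∃ H : SimpleGraph V, H ≤ G ∧
    ∀ c : H.ConnectedComponent,
      Nonempty (H.induce c.supp ≃g completeGraph (Fin 2)) ∨
        ∃ t : ℕ, 1 ≤ t ∧ Nonempty (H.induce c.supp ≃g SimpleGraph.cycleGraph (2 * t + 1))

/-!
(1 ⇒ 2): double counting the weight of the edges between the isolated vertices `I` of `G - S`
and `S` gives `2 |I| ≤ 2 |S|`.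

(2 ⇒ 3): the condition implies Hall's condition for the neighbourhood relation, so there is a
permutation `σ` of `V` with `v ~ σ v` for all `v`. Keeping the odd cycles of `σ` and cutting each
even cycle into the 2-cycles `(v, σ v)`, `v` at even positions, gives such a permutation all of
whose cycles have length 2 or odd length; the graph of its edges `{v, σ v}` is the factor.

(3 ⇒ 1): put weight 2 on the `K₂` components and weight 1 on the edges of the odd cycles.
-/

open Finset Function Equiv

namespace Equiv.Perm

variable {V : Type*}

section CycleRep

variable (m : Perm V)

noncomputable def cycleRep (v : V) : V := (Quotient.mk (SameCycle.setoid m) v).out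

theorem sameCycle_cycleRep (v : V) : m.SameCycle (m.cycleRep v) v :=
  Quotient.exact (Quotient.out_eq (Quotient.mk (SameCycle.setoid m) v))

theorem cycleRep_eq {v w : V} (h : m.SameCycle v w) : m.cycleRep v = m.cycleRep w :=
  congrArg Quotient.out (Quotient.sound h)

def EvenPos (v : V) : Prop := ∃ n, Even n ∧ (m ^ n) (m.cycleRep v) = v

/- On an odd cycle every point is at an even position (go once more around the cycle), so this is
`m`; on an even cycle the parity of the position is well defined, and this swaps `v` and `m v`
for `v` at an even position. -/
open scoped Classical in
noncomputable def splitEvenCycles (v : V) : V := if m.EvenPos v then m v else m⁻¹ v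

variable {m}

theorem splitEvenCycles_of_evenPos {v : V} (h : m.EvenPos v) : m.splitEvenCycles v = m v :=
  if_pos h

theorem splitEvenCycles_of_not_evenPos {v : V} (h : ¬ m.EvenPos v) :
    m.splitEvenCycles v = m⁻¹ v :=
  if_neg h

theorem sameCycle_splitEvenCycles (v : V) : m.SameCycle v (m.splitEvenCycles v) := by
  unfold splitEvenCycles
  split_ifs
  exacts [sameCycle_apply_right.mpr .rfl, sameCycle_symm_apply_right.mpr .rfl]

end CycleRep

variable [Fintype V] [DecidableEq V]

theorem card_support_cycleOf_eq_two {σ : Perm V} {v : V} (h₁ : σ v ≠ v) (h₂ : σ (σ v) = v) :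
    #(σ.cycleOf v).support = 2 := by
  have hv : v ∈ (σ.cycleOf v).support := mem_support_cycleOf_iff.mpr ⟨.rfl, mem_support.mpr h₁⟩
  have hdvd := ((σ.isCycleOn_support_cycleOf v).pow_apply_eq hv (n := 2)).mp h₂
  have := two_le_card_support_cycleOf_iff.mpr h₁
  have := Nat.le_of_dvd two_pos hdvd
  omega

theorem support_cycleOf_eq_of_pow_apply_eq {σ τ : Perm V} {v : V}
    (h : ∀ n : ℕ, (σ ^ n) v = (τ ^ n) v) : (σ.cycleOf v).support = (τ.cycleOf v).support := by
  have hsame : ∀ w, σ.SameCycle v w ↔ τ.SameCycle v w := fun w =>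
    ⟨fun hw => by obtain ⟨n, rfl⟩ := hw.exists_nat_pow_eq; exact ⟨n, by simp [h]⟩,
      fun hw => by obtain ⟨n, rfl⟩ := hw.exists_nat_pow_eq; exact ⟨n, by simp [← h]⟩⟩
  ext w
  rw [mem_support_cycleOf_iff, mem_support_cycleOf_iff, hsame, mem_support, mem_support,
    show σ v = τ v by simpa using h 1]

variable {m : Perm V}

theorem evenPos_of_odd {v : V} (hodd : Odd #(m.cycleOf v).support) : m.EvenPos v := by
  set r := m.cycleRep v
  have hr : m.SameCycle r v := m.sameCycle_cycleRep v
  obtain ⟨n, hn⟩ := hr.exists_nat_pow_eq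
  rcases Nat.even_or_odd n with heven | hnodd
  · exact ⟨n, heven, hn⟩
  · refine ⟨n + #(m.cycleOf r).support, hnodd.add_odd (hr.cycleOf_eq ▸ hodd), ?_⟩
    rw [← pow_mod_card_support_cycleOf_self_apply, Nat.add_mod_right,
      pow_mod_card_support_cycleOf_self_apply, hn]

theorem evenPos_apply_iff {v : V} (hv : m v ≠ v) (heven : Even #(m.cycleOf v).support) :
    m.EvenPos (m v) ↔ ¬ m.EvenPos v := by
  set r := m.cycleRep v
  have hr : m.SameCycle r v := m.sameCycle_cycleRep v
  have hrep : m.cycleRep (m v) = r := (m.cycleRep_eq (sameCycle_apply_right.mpr .rfl)).symm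
  have hpow : ∀ {a b : ℕ}, (m ^ a) r = (m ^ b) r ↔ a ≡ b [MOD #(m.cycleOf v).support] :=
    (m.isCycleOn_support_cycleOf v).pow_apply_eq_pow_apply
      (mem_support_cycleOf_iff.mpr ⟨hr.symm, mem_support.mpr hv⟩)
  have hsucc : ∀ b, (m ^ (b + 1)) r = m ((m ^ b) r) := fun b => by rw [pow_succ', mul_apply]
  unfold EvenPos
  rw [hrep]
  constructor
  · rintro ⟨a, ha, hav⟩ ⟨b, hb, hbv⟩
    have := (hpow.mp (hav.trans (hbv ▸ hsucc b).symm)).of_dvd (even_iff_two_dvd.mp heven)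
    rw [Nat.even_iff] at ha hb
    unfold Nat.ModEq at this
    omega
  · intro hnot
    obtain ⟨b, hb⟩ := hr.exists_nat_pow_eq
    refine ⟨b + 1, ?_, by rw [hsucc, hb]⟩
    exact (Nat.not_even_iff_odd.mp fun h => hnot ⟨b, h, hb⟩).add_one

theorem splitEvenCycles_of_odd {v : V} (hodd : Odd #(m.cycleOf v).support) :
    m.splitEvenCycles v = m v :=
  splitEvenCycles_of_evenPos (evenPos_of_odd hodd)

theorem splitEvenCycles_splitEvenCycles {v : V} (hv : m v ≠ v)
    (heven : Even #(m.cycleOf v).support) : m.splitEvenCycles (m.splitEvenCycles v) = v := by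
  by_cases hpos : m.EvenPos v
  · have hnext : ¬ m.EvenPos (m v) := fun h => (evenPos_apply_iff hv heven).mp h hpos
    rw [splitEvenCycles_of_evenPos hpos, splitEvenCycles_of_not_evenPos hnext]
    exact m.symm_apply_apply v
  · have hsame : m.SameCycle (m⁻¹ v) v := sameCycle_symm_apply_left.mpr .rfl
    have hv' : m (m⁻¹ v) ≠ m⁻¹ v := by simpa [Equiv.eq_symm_apply] using hv
    have hprev : m.EvenPos (m⁻¹ v) := by
      simpa [hpos] using evenPos_apply_iff hv' (hsame.cycleOf_eq ▸ heven)
    rw [splitEvenCycles_of_not_evenPos hpos, splitEvenCycles_of_evenPos hprev]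
    exact m.apply_symm_apply v

theorem splitEvenCycles_injective (hm : ∀ v, m v ≠ v) : Injective m.splitEvenCycles := by
  intro a b hab
  have hsame : m.SameCycle a b :=
    (m.sameCycle_splitEvenCycles a).trans (hab ▸ (m.sameCycle_splitEvenCycles b).symm)
  rcases Nat.even_or_odd #(m.cycleOf a).support with heven | hodd
  · rw [← splitEvenCycles_splitEvenCycles (hm a) heven, hab,
      splitEvenCycles_splitEvenCycles (hm b) (hsame.cycleOf_eq ▸ heven)]
  · rw [splitEvenCycles_of_odd hodd, splitEvenCycles_of_odd (hsame.cycleOf_eq ▸ hodd)] at hab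
    exact m.injective hab

theorem exists_perm_card_support_cycleOf_eq_two_or_odd (hm : ∀ v, m v ≠ v) :
    ∃ σ : Perm V, (∀ v, σ v = m v ∨ m (σ v) = v) ∧
      ∀ v, #(σ.cycleOf v).support = 2 ∨ Odd #(σ.cycleOf v).support := by
  let σ : Perm V := .ofBijective _ (splitEvenCycles_injective hm).bijective_of_finite
  have hσ : ∀ v, σ v = m.splitEvenCycles v := fun _ => rfl
  have hstep : ∀ v, σ v = m v ∨ m (σ v) = v := fun v => by
    by_cases h : m.EvenPos v
    · exact .inl (splitEvenCycles_of_evenPos h)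
    · exact .inr (by rw [hσ, splitEvenCycles_of_not_evenPos h]; exact m.apply_symm_apply v)
  refine ⟨σ, hstep, fun v => ?_⟩
  rcases Nat.even_or_odd #(m.cycleOf v).support with heven | hodd
  · have hσv : σ v ≠ v := fun h => by
      rcases hstep v with h' | h' <;> rw [h] at h'
      exacts [hm v h'.symm, hm v h']
    exact .inl (card_support_cycleOf_eq_two hσv (splitEvenCycles_splitEvenCycles (hm v) heven))
  · have hpow : ∀ n : ℕ, (σ ^ n) v = (m ^ n) v := by
      intro n
      induction n with
      | zero => rfl
      | succ n ih =>
        have hsame : m.SameCycle v ((m ^ n) v) := sameCycle_pow_right.mpr .rfl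
        rw [pow_succ', mul_apply, ih, pow_succ', mul_apply, hσ,
          splitEvenCycles_of_odd (hsame.cycleOf_eq ▸ hodd)]
    exact .inr (support_cycleOf_eq_of_pow_apply_eq hpow ▸ hodd)

end Equiv.Perm

theorem Fin.sub_eq_one_iff_modEq {n : ℕ} (i j : Fin (n + 2)) :
    j - i = 1 ↔ i.val + 1 ≡ j.val [MOD n + 2] := by
  rw [sub_eq_iff_eq_add', Fin.ext_iff, Fin.val_add, Fin.val_one, Nat.ModEq,
    Nat.mod_eq_of_lt j.isLt, eq_comm]

namespace SimpleGraph

variable {V : Type*}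

section TwoMatching

variable [Fintype V] {G : SimpleGraph V} {f : Sym2 V → ℕ}

theorem finsum_incidenceSet_eq_sum (hf : ∀ e, f e ≠ 0 → e ∈ G.edgeSet) (v : V) :
    ∑ᶠ e ∈ G.incidenceSet v, f e = ∑ w, f s(v, w) := by
  rw [← finsum_eq_sum_of_fintype, ← finsum_mem_range fun _ _ => Sym2.congr_right.mp]
  refine finsum_mem_inter_support_eq' _ _ _ fun e he => ?_
  simp only [incidenceSet, Set.mem_ofPred_eq, Set.mem_range, hf e he, true_and,
    Sym2.mem_iff_exists, eq_comm]

theorem isPerfectTwoMatching_iff :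
    G.IsPerfectTwoMatching f ↔
      (∀ e, f e ≠ 0 → e ∈ G.edgeSet) ∧ ∀ v, ∑ w, f s(v, w) = 2 := by
  refine ⟨fun ⟨hf, _, hsum⟩ => ⟨hf, fun v => ?_⟩,
    fun ⟨hf, hsum⟩ => ⟨hf, fun e => ?_, fun v => ?_⟩⟩
  · rw [← finsum_incidenceSet_eq_sum hf, hsum]
  · induction e with
    | h v w =>
      exact hsum v ▸ single_le_sum (f := (f s(v, ·))) (fun _ _ => Nat.zero_le _) (mem_univ w)
  · rw [finsum_incidenceSet_eq_sum hf, hsum]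

theorem isoCount_eq_card (S : Set V) [DecidablePred (· ∈ S)] [DecidableRel G.Adj] :
    G.isoCount S = #{v | v ∉ S ∧ ∀ w, G.Adj v w → w ∈ S} := by
  rw [isoCount, Nat.card_eq_fintype_card, Fintype.card_subtype]

theorem IsPerfectTwoMatching.isoCount_le (hf : G.IsPerfectTwoMatching f) (S : Set V) :
    G.isoCount S ≤ S.ncard := by
  classical
  obtain ⟨hsupp, hsum⟩ := isPerfectTwoMatching_iff.mp hf
  rw [isoCount_eq_card, Set.ncard_eq_toFinset_card']
  set I : Finset V := {v | v ∉ S ∧ ∀ w, G.Adj v w → w ∈ S}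
  have hI : ∀ v ∈ I, ∑ w, f s(v, w) = ∑ w ∈ S.toFinset, f s(v, w) := by
    refine fun v hv => (sum_subset (subset_univ _) fun w _ hw => ?_).symm
    by_contra hne
    exact hw (Set.mem_toFinset.mpr ((mem_filter.mp hv).2.2 w (hsupp _ hne)))
  refine Nat.le_of_mul_le_mul_left ?_ two_pos
  calc 2 * #I
      _ = ∑ v ∈ I, ∑ w ∈ S.toFinset, f s(v, w) := by
        rw [← sum_congr rfl hI, sum_congr rfl fun v _ => hsum v, sum_const, smul_eq_mul, mul_comm]
      _ ≤ ∑ v, ∑ w ∈ S.toFinset, f s(v, w) := sum_le_sum_of_subset (subset_univ _)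
      _ = ∑ w ∈ S.toFinset, ∑ v, f s(w, v) := by
        rw [sum_comm]
        simp only [Sym2.eq_swap]
      _ = 2 * #S.toFinset := by
        rw [sum_congr rfl fun v _ => hsum v, sum_const, smul_eq_mul, mul_comm]

theorem exists_perm_adj_of_isoCount_le (h : ∀ S, G.isoCount S ≤ S.ncard) :
    ∃ σ : Perm V, ∀ v, G.Adj v (σ v) := by
  classical
  suffices hall : ∀ A : Finset V, #A ≤ #{w | ∃ v ∈ A, G.Adj v w} by
    obtain ⟨σ, hσ, hadj⟩ := (Fintype.all_card_le_filter_rel_iff_exists_injective _).mp hall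
    exact ⟨.ofBijective σ hσ.bijective_of_finite, hadj⟩
  intro A
  set N : Finset V := {w | ∃ v ∈ A, G.Adj v w}
  -- the vertices of `A \ N` have no neighbour in `A`, and are isolated in `G - S`
  set S : Finset V := {w | ∃ v ∈ A \ N, G.Adj v w}
  have hS : S ⊆ N \ A := by
    intro w hw
    obtain ⟨v, hv, hvw⟩ := by simpa [S] using hw
    simp only [N, mem_sdiff, mem_filter, mem_univ, true_and, not_exists, not_and] at hv ⊢
    exact ⟨⟨v, hv.1, hvw⟩, fun hwA => hv.2 w hwA hvw.symm⟩
  have hiso : #(A \ N) ≤ #S :=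
    calc #(A \ N)
      _ ≤ G.isoCount (S : Set V) := by
        rw [isoCount_eq_card]
        refine card_le_card fun v hv => ?_
        simp only [mem_filter, mem_univ, true_and, mem_coe]
        refine ⟨fun hvS => ?_, fun w hvw => mem_filter.mpr ⟨mem_univ w, v, hv, hvw⟩⟩
        exact (mem_sdiff.mp (hS hvS)).2 (mem_sdiff.mp hv).1
      _ ≤ #S := by simpa using h S
  have := card_le_card hS
  have := card_sdiff_add_card_inter A N
  have := card_sdiff_add_card_inter N A
  rw [inter_comm] at this
  omega

theorem exists_isPerfectTwoMatching_of_le [DecidableEq V] (H : SimpleGraph V) [DecidableRel H.Adj]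
    (hHG : H ≤ G) (hdeg : ∀ v, H.degree v = 1 ∨ H.degree v = 2)
    (hadj : ∀ v w, H.Adj v w → H.degree v = H.degree w) :
    ∃ f, G.IsPerfectTwoMatching f := by
  let f : Sym2 V → ℕ := fun e =>
    if e ∈ H.edgeSet then if ∀ v ∈ e, H.degree v = 1 then 2 else 1 else 0
  have hf : ∀ v w, f s(v, w) = if H.Adj v w then if H.degree v = 1 then 2 else 1 else 0 := by
    intro v w
    by_cases hvw : H.Adj v w
    · simp [f, hvw, hadj v w hvw]
    · simp [f, hvw]
  refine ⟨f, isPerfectTwoMatching_iff.mpr ⟨fun e he => ?_, fun v => ?_⟩⟩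
  · by_contra hG
    exact he (if_neg fun hH => hG (edgeSet_mono hHG hH))
  · rw [sum_congr rfl fun w _ => hf v w, ← sum_filter, sum_const, ← neighborFinset_eq_filter,
      card_neighborFinset_eq_degree]
    rcases hdeg v with h | h <;> simp [h]

end TwoMatching

theorem ConnectedComponent.degree_eq_of_induce_supp_iso [Fintype V] {H : SimpleGraph V}
    [DecidableRel H.Adj] {c : H.ConnectedComponent} {W : Type*} [Fintype W] {K : SimpleGraph W}
    [DecidableRel K.Adj] (φ : H.induce c.supp ≃g K) {d : ℕ} (hK : K.IsRegularOfDegree d)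
    {v : V} (hv : v ∈ c.supp) : H.degree v = d := by
  classical
  have hN : H.neighborSet v ⊆ c.supp := fun w hw =>
    ((ConnectedComponent.connectedComponentMk_eq_of_adj hw).symm.trans hv :)
  rw [← degree_induce_of_neighborSet_subset (v := ⟨v, hv⟩) hN, ← φ.degree_eq, hK.degree_eq]

theorem isRegularOfDegree_cycleGraph {t : ℕ} (ht : 1 ≤ t) :
    (cycleGraph (2 * t + 1)).IsRegularOfDegree 2 := by
  obtain ⟨n, rfl⟩ : ∃ n, t = n + 1 := ⟨t - 1, by omega⟩
  rw [show 2 * (n + 1) + 1 = 2 * n + 3 by ring]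
  exact fun _ => cycleGraph_degree_three_le

theorem HasK2OddCycleFactor.exists_isPerfectTwoMatching [Fintype V] {G : SimpleGraph V}
    (h : G.HasK2OddCycleFactor) : ∃ f, G.IsPerfectTwoMatching f := by
  classical
  obtain ⟨H, hHG, hcomp⟩ := h
  have hdeg (c : H.ConnectedComponent) :
      ∃ d, (d = 1 ∨ d = 2) ∧ ∀ v ∈ c.supp, H.degree v = d := by
    rcases hcomp c with ⟨⟨φ⟩⟩ | ⟨t, ht, ⟨φ⟩⟩
    · exact ⟨1, .inl rfl, fun _ => c.degree_eq_of_induce_supp_iso φ IsRegularOfDegree.top⟩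
    · exact ⟨2, .inr rfl, fun _ =>
        c.degree_eq_of_induce_supp_iso φ (isRegularOfDegree_cycleGraph ht)⟩
  refine exists_isPerfectTwoMatching_of_le H hHG (fun v => ?_) (fun v w hvw => ?_)
  · obtain ⟨d, hd, hv⟩ := hdeg (H.connectedComponentMk v)
    exact hv v rfl ▸ hd
  · obtain ⟨d, -, hv⟩ := hdeg (H.connectedComponentMk v)
    rw [hv v rfl, hv w (ConnectedComponent.connectedComponentMk_eq_of_adj hvw).symm]

def fromPerm (σ : Perm V) : SimpleGraph V := fromRel fun v w => σ v = w

section FromPerm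

variable (σ : Perm V) {v w : V}

theorem fromPerm_le {G : SimpleGraph V} (h : ∀ v, G.Adj v (σ v)) : fromPerm σ ≤ G := by
  rintro v w ⟨-, rfl | rfl⟩
  exacts [h v, (h w).symm]

theorem fromPerm_adj : (fromPerm σ).Adj v w ↔ v ≠ w ∧ (σ v = w ∨ σ w = v) := fromRel_adj ..

theorem fromPerm_reachable_iff [Finite V] : (fromPerm σ).Reachable v w ↔ σ.SameCycle v w := by
  refine ⟨fun h => ?_, fun h => ?_⟩
  · rw [reachable_iff_reflTransGen] at h
    refine Relation.reflTransGen_le_of_equivalence_of_le (Perm.SameCycle.setoid σ).iseqv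
      (fun a b hab => ?_) _ _ h
    rcases ((fromPerm_adj σ).mp hab).2 with rfl | rfl
    exacts [Perm.sameCycle_apply_right.mpr .rfl, Perm.sameCycle_apply_left.mpr .rfl]
  · obtain ⟨n, rfl⟩ := h.exists_nat_pow_eq
    clear h
    induction n with
    | zero => rfl
    | succ n ih =>
      refine ih.trans ?_
      rw [pow_succ', Perm.mul_apply]
      by_cases hfix : σ ((σ ^ n) v) = (σ ^ n) v
      · rw [hfix]
      · exact Adj.reachable ((fromPerm_adj σ).mpr ⟨Ne.symm hfix, .inl rfl⟩)

theorem nonempty_induce_supp_fromPerm_iso [Fintype V] [DecidableEq V] (hv : σ v ≠ v) :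
    Nonempty ((fromPerm σ).induce ((fromPerm σ).connectedComponentMk v).supp ≃g
      cycleGraph #(σ.cycleOf v).support) := by
  set c := (fromPerm σ).connectedComponentMk v
  set s := (σ.cycleOf v).support
  have hs : σ.IsCycleOn s := σ.isCycleOn_support_cycleOf v
  have hmem : ∀ w, w ∈ c.supp ↔ σ.SameCycle v w := fun w => by
    rw [ConnectedComponent.mem_supp_iff, ConnectedComponent.eq, fromPerm_reachable_iff,
      Perm.sameCycle_comm]
  have hsupp : ∀ w, w ∈ s ↔ σ.SameCycle v w := fun w => by
    rw [Perm.mem_support_cycleOf_iff, and_iff_left (Perm.mem_support.mpr hv)]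
  have hpow : ∀ {a b : ℕ}, (σ ^ a) v = (σ ^ b) v ↔ a ≡ b [MOD #s] :=
    hs.pow_apply_eq_pow_apply ((hsupp v).mpr .rfl)
  obtain ⟨n, hn⟩ : ∃ n, #s = n + 2 :=
    ⟨#s - 2, by have : 2 ≤ #s := Perm.two_le_card_support_cycleOf_iff.mpr hv; omega⟩
  rw [hn] at hpow ⊢
  let φ : Fin (n + 2) → c.supp := fun i =>
    ⟨(σ ^ (i : ℕ)) v, (hmem _).mpr (Perm.sameCycle_pow_right.mpr .rfl)⟩
  have hφ : Bijective φ := by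
    refine ⟨fun i j hij => Fin.ext ?_, fun ⟨w, hw⟩ => ?_⟩
    · exact Nat.ModEq.eq_of_lt_of_lt (hpow.mp (congrArg Subtype.val hij)) i.isLt j.isLt
    · obtain ⟨i, hi, rfl⟩ :=
        hs.exists_pow_eq ((hsupp v).mpr .rfl) ((hsupp w).mpr ((hmem w).mp hw))
      exact ⟨⟨i, hn ▸ hi⟩, rfl⟩
  refine ⟨Iso.symm ⟨.ofBijective φ hφ, fun {i j} => ?_⟩⟩
  have hsucc : ∀ k : Fin (n + 2), σ (φ k) = (σ ^ ((k : ℕ) + 1)) v := fun k => by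
    rw [pow_succ', Perm.mul_apply]
  change (fromPerm σ).Adj (φ i) (φ j) ↔ _
  rw [fromPerm_adj, hsucc, hsucc, hpow, hpow, Ne, Subtype.val_inj, hφ.injective.eq_iff,
    ← Fin.sub_eq_one_iff_modEq, ← Fin.sub_eq_one_iff_modEq, cycleGraph_adj, or_comm]
  refine and_iff_right_of_imp ?_
  rintro h rfl
  simp at h

end FromPerm

theorem hasK2OddCycleFactor_of_perm [Fintype V] [DecidableEq V] {G : SimpleGraph V}
    (σ : Perm V) (hadj : ∀ v, G.Adj v (σ v))
    (hlen : ∀ v, #(σ.cycleOf v).support = 2 ∨ Odd #(σ.cycleOf v).support) :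
    G.HasK2OddCycleFactor := by
  refine ⟨fromPerm σ, fromPerm_le σ hadj, fun c => ?_⟩
  obtain ⟨v, rfl⟩ := c.exists_rep
  have hv : σ v ≠ v := fun h => G.irrefl (h ▸ hadj v)
  obtain ⟨φ⟩ := nonempty_induce_supp_fromPerm_iso σ hv
  rcases hlen v with h | ⟨t, ht⟩
  · rw [h, cycleGraph_two_eq_top] at φ
    exact .inl ⟨φ⟩
  · have : 2 ≤ #(σ.cycleOf v).support := Perm.two_le_card_support_cycleOf_iff.mpr hv
    exact .inr ⟨t, by omega, ⟨ht ▸ φ⟩⟩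

end SimpleGraph

theorem tutte_two_matching_tfae_general {V : Type*} [Fintype V]
    (G : SimpleGraph V) :
    List.TFAE [(∃ f, G.IsPerfectTwoMatching f),
      (∀ S : Set V, G.isoCount S ≤ S.ncard),
      G.HasK2OddCycleFactor] := by
  classical
  tfae_have 1 → 2 := fun ⟨_, hf⟩ => hf.isoCount_le
  tfae_have 2 → 3 := fun h => by
    obtain ⟨m, hm⟩ := SimpleGraph.exists_perm_adj_of_isoCount_le h
    obtain ⟨σ, hσm, hσ⟩ :=
      m.exists_perm_card_support_cycleOf_eq_two_or_odd fun v hv => G.irrefl (hv ▸ hm v)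
    refine SimpleGraph.hasK2OddCycleFactor_of_perm σ (fun v => ?_) hσ
    rcases hσm v with h | h
    · exact h ▸ hm v
    · exact (h ▸ hm (σ v)).symm
  tfae_have 3 → 1 := SimpleGraph.HasK2OddCycleFactor.exists_isPerfectTwoMatching
  tfae_finish

/-- (Tutte) For a finite connected graph `G` the following are equivalent:
(1) `G` has a perfect `2`-matching;
(2) `i(G - S) ≤ |S|` for every subset `S` of `V(G)`;
(3) `G` has a `{K₂, C_{2t+1} | t ≥ 1}`-factor. -/
theorem tutte_two_matching_tfae {V : Type*} [Fintype V]
    (G : SimpleGraph V) (hconn : G.Connected) :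
    List.TFAE [(∃ f, G.IsPerfectTwoMatching f),
      (∀ S : Set V, G.isoCount S ≤ S.ncard),
      G.HasK2OddCycleFactor] :=
  tutte_two_matching_tfae_general G
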